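/- arXiv:2009.02417 — 5 statements merged into one kernel-verified Lean document; each statement's English description precedes it below -/
import Mathlib

section
/- Let C be the convex hull of a finite set of points in R^3 and let B be the minimal axis-parallel bounding box of C. Then the Hausdorff distance from B to C is at most sqrt(3/2) times the diameter of C. -/
/-!
Every point `b` of the bounding box has, for each axis `j`, a point `q j` of `C` with the same
`j`-th coordinate, because the projection of a compact convex set onto an axis is the full
interval between its extremes. The centroid `c` of the `q j` lies in `C`, and
`b i - c i = (1/n) ∑ⱼ (q i i - q j i)` has at most `n - 1` nonzero terms, each bounded by `diam C`.
Hence `dist b c ≤ √n · (n-1)/n · diam C`, which for `n = 3` is `(2/√3) · diam C ≤ √(3/2) · diam C`.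
-/

open Metric Set

namespace EuclideanSpace

variable {ι : Type*} [Fintype ι]

def boundingBox (C : Set (EuclideanSpace ℝ ι)) : Set (EuclideanSpace ℝ ι) :=
  WithLp.ofLp ⁻¹' Set.univ.pi fun i =>
    Set.Icc (sInf ((fun c => c i) '' C)) (sSup ((fun c => c i) '' C))

lemma dist_le_sqrt_card_mul {x y : EuclideanSpace ℝ ι} {r : ℝ} (hr : 0 ≤ r)
    (h : ∀ i, |x i - y i| ≤ r) : dist x y ≤ √(Fintype.card ι) * r := by
  have hsq : ∀ i, dist (x i) (y i) ^ 2 ≤ r ^ 2 := fun i =>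
    pow_le_pow_left₀ dist_nonneg ((Real.dist_eq _ _).trans_le (h i)) 2
  calc dist x y = √(∑ i, dist (x i) (y i) ^ 2) := EuclideanSpace.dist_eq x y
    _ ≤ √(∑ _i : ι, r ^ 2) := Real.sqrt_le_sqrt (Finset.sum_le_sum fun i _ => hsq i)
    _ = √(Fintype.card ι) * r := by
      rw [Finset.sum_const, Finset.card_univ, nsmul_eq_mul, Real.sqrt_mul (Nat.cast_nonneg _),
        Real.sqrt_sq hr]

variable {C : Set (EuclideanSpace ℝ ι)}

lemma image_apply_eq_Icc (hconv : Convex ℝ C) (hcomp : IsCompact C) (hne : C.Nonempty) (i : ι) :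
    (fun c : EuclideanSpace ℝ ι => c i) '' C =
      Icc (sInf ((fun c => c i) '' C)) (sSup ((fun c => c i) '' C)) :=
  eq_Icc_of_connected_compact
    ((hconv.isConnected hne).image _ (PiLp.continuous_apply 2 _ i).continuousOn)
    (hcomp.image (PiLp.continuous_apply 2 _ i))

lemma mem_boundingBox_iff (hconv : Convex ℝ C) (hcomp : IsCompact C) (hne : C.Nonempty)
    {b : EuclideanSpace ℝ ι} : b ∈ boundingBox C ↔ ∀ i, ∃ q ∈ C, q i = b i := by
  simp only [boundingBox, mem_preimage, mem_univ_pi, ← image_apply_eq_Icc hconv hcomp hne,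
    mem_image]

lemma subset_boundingBox (hconv : Convex ℝ C) (hcomp : IsCompact C) (hne : C.Nonempty) :
    C ⊆ boundingBox C := fun c hc =>
  (mem_boundingBox_iff hconv hcomp hne).2 fun _ => ⟨c, hc, rfl⟩

variable [Nonempty ι]

noncomputable def axisCentroid (q : ι → EuclideanSpace ℝ ι) : EuclideanSpace ℝ ι :=
  (Fintype.card ι : ℝ)⁻¹ • ∑ j, q j

lemma axisCentroid_mem (hconv : Convex ℝ C) {q : ι → EuclideanSpace ℝ ι} (hq : ∀ j, q j ∈ C) :
    axisCentroid q ∈ C := by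
  have hn : (Fintype.card ι : ℝ) ≠ 0 := Nat.cast_ne_zero.2 Fintype.card_ne_zero
  rw [axisCentroid, Finset.smul_sum]
  exact hconv.sum_mem (fun _ _ => by positivity)
    (by simp [Finset.sum_const, Finset.card_univ, hn]) fun j _ => hq j

lemma abs_apply_sub_axisCentroid_le (hC : Bornology.IsBounded C) {q : ι → EuclideanSpace ℝ ι}
    (hq : ∀ j, q j ∈ C) (i : ι) :
    |q i i - axisCentroid q i| ≤ (Fintype.card ι - 1) / Fintype.card ι * diam C := by
  have hn : (0 : ℝ) < Fintype.card ι := Nat.cast_pos.2 Fintype.card_pos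
  have hrepr : q i i - axisCentroid q i = (Fintype.card ι : ℝ)⁻¹ * ∑ j, (q i i - q j i) := by
    simp only [axisCentroid, PiLp.smul_apply, WithLp.ofLp_sum, Finset.sum_apply, smul_eq_mul,
      Finset.sum_sub_distrib, Finset.sum_const, Finset.card_univ, nsmul_eq_mul]
    field_simp
  have hsum : ∑ j, |q i i - q j i| ≤ (Fintype.card ι - 1) * diam C := by
    classical
    rw [← Finset.sum_erase (f := fun j => |q i i - q j i|) (a := i) _ (by simp)]
    calc ∑ j ∈ Finset.univ.erase i, |q i i - q j i|
        ≤ ∑ _j ∈ Finset.univ.erase i, diam C := Finset.sum_le_sum fun j _ =>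
          ((Real.dist_eq _ _).symm.trans_le (PiLp.dist_apply_le _ _ _)).trans
            (dist_le_diam_of_mem hC (hq i) (hq j))
      _ = (Fintype.card ι - 1) * diam C := by
        rw [Finset.sum_const, Finset.card_erase_of_mem (Finset.mem_univ i), Finset.card_univ,
          nsmul_eq_mul, Nat.cast_pred Fintype.card_pos]
  calc |q i i - axisCentroid q i| = (Fintype.card ι : ℝ)⁻¹ * |∑ j, (q i i - q j i)| := by
        rw [hrepr, abs_mul, abs_inv, abs_of_pos hn]
    _ ≤ (Fintype.card ι : ℝ)⁻¹ * ((Fintype.card ι - 1) * diam C) := by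
        gcongr
        exact (Finset.abs_sum_le_sum_abs _ _).trans hsum
    _ = (Fintype.card ι - 1) / Fintype.card ι * diam C := by ring

theorem hausdorffDist_boundingBox_le (hconv : Convex ℝ C) (hcomp : IsCompact C)
    (hne : C.Nonempty) :
    hausdorffDist (boundingBox C) C ≤
      √(Fintype.card ι) * ((Fintype.card ι - 1) / Fintype.card ι * diam C) := by
  have hr : 0 ≤ (Fintype.card ι - 1 : ℝ) / Fintype.card ι * diam C := by
    have : (1 : ℝ) ≤ Fintype.card ι := Nat.one_le_cast.2 Fintype.card_pos
    exact mul_nonneg (div_nonneg (by linarith) (by linarith)) diam_nonneg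
  refine hausdorffDist_le_of_mem_dist (by positivity) (fun b hb => ?_) fun c hc =>
    ⟨c, subset_boundingBox hconv hcomp hne hc, by rw [dist_self]; positivity⟩
  choose q hqC hqb using (mem_boundingBox_iff hconv hcomp hne).1 hb
  refine ⟨axisCentroid q, axisCentroid_mem hconv hqC, dist_le_sqrt_card_mul hr fun i => ?_⟩
  rw [← hqb i]
  exact abs_apply_sub_axisCentroid_le hcomp.isBounded hqC i

end EuclideanSpace

/-- For a finite point set in ℝ³ with convex hull `C` and minimal
axis-parallel bounding box `B`, the Hausdorff distance from `B` to `C` is at most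
`√(3/2)` times the diameter of `C`. -/
theorem stmt_0 (X : Set (EuclideanSpace ℝ (Fin 3))) (hX : X.Finite) (hne : X.Nonempty)
    (C B : Set (EuclideanSpace ℝ (Fin 3)))
    (hC : C = convexHull ℝ X)
    (hB : B = WithLp.ofLp ⁻¹' Set.univ.pi fun i =>
      Set.Icc (sInf ((fun c => c i) '' C)) (sSup ((fun c => c i) '' C))) :
    Metric.hausdorffDist B C ≤ Real.sqrt (3 / 2) * Metric.diam C := by
  subst hC hB
  have hbound := EuclideanSpace.hausdorffDist_boundingBox_le (convex_convexHull ℝ X)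
    (hX.isCompact_convexHull (𝕜 := ℝ)) (hne.mono (subset_convexHull ℝ X))
  have hconst : √3 * ((3 - 1) / 3) ≤ √(3 / 2) := by
    rw [Real.le_sqrt (by positivity) (by norm_num), mul_pow, Real.sq_sqrt (by norm_num)]
    norm_num
  simp only [Fintype.card_fin, Nat.cast_ofNat] at hbound
  calc _ ≤ √3 * ((3 - 1) / 3 * diam (convexHull ℝ X)) := hbound
    _ = √3 * ((3 - 1) / 3) * diam (convexHull ℝ X) := by ring
    _ ≤ √(3 / 2) * diam (convexHull ℝ X) := by gcongr
end

section
/- Let d ≥ 2 and for each i in {1,...,d} define p_i ∈ R^d with i-th coordinate 0 and all other coordinates 1/sqrt(2), and p'_i ∈ R^d with i-th coordinate 1 and all other coordinates 1/sqrt(2). Then the diameter of the set {p_1,p'_1,...,p_d,p'_d} equals 1, and the centroid z of {p_1,...,p_d} satisfies ||z|| = ((d-1)/d)·sqrt(d/2). -/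
/-!
Every point is the constant vector `c = 1/√2` with one coordinate `a` moved to a value `u ∈ [0, 1]`.
Two such points with the same `a` are at distance `|u - v| ≤ 1`, with equality for `p a, p' a`.
If the moved coordinates differ, the squared distance is `(u - c)² + (v - c)²`, and each term is
at most `c² = 1/2` because `0 ≤ u ≤ 2c`. Every coordinate of the centroid equals `(d - 1) c / d`.
-/

open Set

section Spike

variable {ι : Type*} [DecidableEq ι]

def spike (c u : ℝ) (a : ι) : EuclideanSpace ℝ ι :=
  WithLp.toLp 2 fun k => if k = a then u else c

@[simp]
theorem spike_apply (c u : ℝ) (a k : ι) : spike c u a k = if k = a then u else c := rfl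

variable [Fintype ι]

theorem dist_spike_self (c u v : ℝ) (a : ι) : dist (spike c u a) (spike c v a) = |u - v| := by
  rw [EuclideanSpace.dist_eq, Fintype.sum_eq_single a fun k hk => by simp [hk]]
  simp [Real.dist_eq, Real.sqrt_sq_eq_abs]

theorem dist_spike_sq_of_ne (c u v : ℝ) {a b : ι} (hab : a ≠ b) :
    dist (spike c u a) (spike c v b) ^ 2 = (u - c) ^ 2 + (v - c) ^ 2 := by
  rw [EuclideanSpace.dist_eq, Real.sq_sqrt (by positivity),
    Fintype.sum_eq_add a b hab fun k hk => by simp [hk.1, hk.2]]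
  simp [hab, hab.symm, Real.dist_eq, sq_abs, sub_sq_comm c v]

theorem dist_spike_le_one {c u v : ℝ} (hc : 2 * c ^ 2 = 1) (hc0 : 0 ≤ c)
    (hu : u ∈ Icc (0 : ℝ) 1) (hv : v ∈ Icc (0 : ℝ) 1) (a b : ι) :
    dist (spike c u a) (spike c v b) ≤ 1 := by
  obtain rfl | hab := eq_or_ne a b
  · rw [dist_spike_self, abs_le]
    constructor <;> linarith [hu.1, hu.2, hv.1, hv.2]
  · have h2c : 1 ≤ 2 * c := by nlinarith
    have hsq : dist (spike c u a) (spike c v b) ^ 2 ≤ 1 := by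
      rw [dist_spike_sq_of_ne c u v hab]
      nlinarith [hu.1, hu.2, hv.1, hv.2]
    nlinarith [dist_nonneg (x := spike c u a) (y := spike c v b)]

theorem diam_range_spike_union [Nonempty ι] {c : ℝ} (hc : 2 * c ^ 2 = 1) (hc0 : 0 ≤ c) :
    Metric.diam (range (spike (ι := ι) c 0) ∪ range (spike c 1)) = 1 := by
  refine le_antisymm (Metric.diam_le_of_forall_dist_le zero_le_one ?_) ?_
  · have hmem : ∀ x ∈ range (spike (ι := ι) c 0) ∪ range (spike c 1),
        ∃ u ∈ Icc (0 : ℝ) 1, ∃ a, x = spike c u a := by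
      rintro x (⟨a, rfl⟩ | ⟨a, rfl⟩)
      exacts [⟨0, by simp, a, rfl⟩, ⟨1, by simp, a, rfl⟩]
    intro x hx y hy
    obtain ⟨u, hu, a, rfl⟩ := hmem x hx
    obtain ⟨v, hv, b, rfl⟩ := hmem y hy
    exact dist_spike_le_one hc hc0 hu hv a b
  · obtain ⟨a⟩ := ‹Nonempty ι›
    calc (1 : ℝ) = dist (spike c 0 a) (spike c 1 a) := by simp [dist_spike_self]
      _ ≤ _ := Metric.dist_le_diam_of_mem
          ((finite_range _).union (finite_range _)).isBounded
          (mem_union_left _ (mem_range_self a)) (mem_union_right _ (mem_range_self a))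

theorem sum_spike_apply (c u : ℝ) (k : ι) :
    (∑ a, spike c u a) k = u + (Fintype.card ι - 1) * c := by
  have h : ∀ a, spike c u a k = c + if k = a then u - c else 0 := fun a => by
    by_cases h : k = a <;> simp [h]
  simp only [WithLp.ofLp_sum, Finset.sum_apply, h, Finset.sum_add_distrib, Finset.sum_ite_eq,
    Finset.mem_univ, if_true, Finset.sum_const, Finset.card_univ, nsmul_eq_mul]
  ring

end Spike

theorem EuclideanSpace.norm_of_forall_apply_eq {ι : Type*} [Fintype ι]
    {x : EuclideanSpace ℝ ι} {b : ℝ} (hx : ∀ k, x k = b) :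
    ‖x‖ = Real.sqrt (Fintype.card ι) * |b| := by
  rw [EuclideanSpace.norm_eq]
  simp [hx, Real.sqrt_mul (Nat.cast_nonneg _), Real.sqrt_sq_eq_abs]

/-- With `p i` having `i`-th coordinate `0` and all others `1/√2`, and
`p' i` having `i`-th coordinate `1` and all others `1/√2`, the diameter of
`{p 1, p' 1, …, p d, p' d}` is `1`, and the centroid `z` of `{p 1, …, p d}` has
norm `((d-1)/d) · √(d/2)`. -/
theorem stmt_2 (d : ℕ) (hd : 2 ≤ d)
    (p p' : Fin d → EuclideanSpace ℝ (Fin d))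
    (hp : ∀ i j, p i j = if j = i then 0 else 1 / Real.sqrt 2)
    (hp' : ∀ i j, p' i j = if j = i then 1 else 1 / Real.sqrt 2)
    (z : EuclideanSpace ℝ (Fin d))
    (hz : z = (1 / (d : ℝ)) • ∑ i, p i) :
    Metric.diam (Set.range p ∪ Set.range p') = 1 ∧
    ‖z‖ = ((d - 1 : ℝ) / d) * Real.sqrt (d / 2) := by
  set c := 1 / Real.sqrt 2
  have hc0 : 0 ≤ c := by positivity
  have hc : 2 * c ^ 2 = 1 := by simp [c]
  obtain rfl : p = spike c 0 := funext fun i => PiLp.ext fun j => hp i j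
  obtain rfl : p' = spike c 1 := funext fun i => PiLp.ext fun j => hp' i j
  have : Nonempty (Fin d) := ⟨⟨0, by omega⟩⟩
  refine ⟨diam_range_spike_union hc hc0, ?_⟩
  have hzk : ∀ k, z k = (d - 1 : ℝ) / d * c := fun k => by
    rw [hz, PiLp.smul_apply, sum_spike_apply, Fintype.card_fin, smul_eq_mul]
    ring
  have hd1 : (0 : ℝ) ≤ d - 1 := by
    rw [sub_nonneg, Nat.one_le_cast]
    omega
  rw [EuclideanSpace.norm_of_forall_apply_eq hzk, Fintype.card_fin,
    abs_of_nonneg (mul_nonneg (div_nonneg hd1 d.cast_nonneg) hc0),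
    Real.sqrt_div' _ zero_le_two]
  ring
end

section
/- Let X be a finite set of N points in R^d, let F < N, and suppose p ∈ R^d is such that every closed half-space containing p contains more than F points of X (e.g., at least N/(d+1) points with F < N/(d+1)). Then for every subset A ⊆ X with |A| ≤ F, the point p lies in the convex hull of X \ A. -/
/-! If `p` were outside the (closed) convex hull of `X \ A`, a separating hyperplane would give
a closed half-space through `p` containing no point of `X \ A`, hence at most `|A| ≤ F` points
of `X`. -/

open RealInnerProductSpace

theorem exists_inner_lt_of_notMem_of_isClosed_convex {E : Type*} [NormedAddCommGroup E]
    [InnerProductSpace ℝ E] [CompleteSpace E] {s : Set E} {p : E} (hconv : Convex ℝ s)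
    (hclosed : IsClosed s) (hp : p ∉ s) :
    ∃ (a : E) (u : ℝ), (∀ x ∈ s, ⟪a, x⟫ < u) ∧ u < ⟪a, p⟫ := by
  obtain ⟨f, u, hs, hpu⟩ := geometric_hahn_banach_closed_point hconv hclosed hp
  refine ⟨(InnerProductSpace.toDual ℝ E).symm f, u, fun x hx => ?_, ?_⟩ <;>
    rw [InnerProductSpace.toDual_symm_apply]
  exacts [hs x hx, hpu]

theorem mem_convexHull_sdiff_of_lt_card_filter {E : Type*} [NormedAddCommGroup E]
    [InnerProductSpace ℝ E] [CompleteSpace E] [DecidableEq E] {X A : Finset E} {F : ℕ} {p : E}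
    (hF : F < X.card)
    (hp : ∀ a : E, a ≠ 0 → ∀ b : ℝ, b ≤ ⟪a, p⟫ → F < (X.filter fun x => b ≤ ⟪a, x⟫).card)
    (hAX : A ⊆ X) (hAF : A.card ≤ F) :
    p ∈ convexHull ℝ ((X \ A : Finset E) : Set E) := by
  by_contra hpA
  obtain ⟨a, u, hlt, hup⟩ := exists_inner_lt_of_notMem_of_isClosed_convex
    (convex_convexHull ℝ _) (Set.Finite.isClosed_convexHull ℝ (X \ A).finite_toSet) hpA
  have hlt' : ∀ x ∈ X \ A, ⟪a, x⟫ < u := fun x hx => hlt x (subset_convexHull ℝ _ hx)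
  obtain ⟨x₀, hx₀⟩ : (X \ A).Nonempty := by
    rw [← Finset.card_pos, Finset.card_sdiff_of_subset hAX]
    omega
  have ha : a ≠ 0 := by
    rintro rfl
    have hx₀u := hlt' x₀ hx₀
    simp only [inner_zero_left] at hx₀u hup
    linarith
  have hsub : (X.filter fun x => u ≤ ⟪a, x⟫) ⊆ A := by
    intro x hx
    rw [Finset.mem_filter] at hx
    by_contra hxA
    exact (hx.2.trans_lt (hlt' x (Finset.mem_sdiff.mpr ⟨hx.1, hxA⟩))).false
  have hmany := hp a ha u hup.le
  have hfew := Finset.card_le_card hsub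
  omega

open Classical in
/-- If every closed half-space containing `p` contains more than `F`
points of the `N`-point set `X`, then for every `A ⊆ X` with `|A| ≤ F`,
`p ∈ conv (X \ A)`. -/
theorem stmt_5 (d : ℕ) (X : Finset (EuclideanSpace ℝ (Fin d))) (N F : ℕ)
    (hN : N = X.card) (hF : F < N) (p : EuclideanSpace ℝ (Fin d))
    (hp : ∀ a : EuclideanSpace ℝ (Fin d), a ≠ 0 → ∀ b : ℝ, b ≤ ⟪a, p⟫ →
      F < (X.filter fun x => b ≤ ⟪a, x⟫).card) :
    ∀ A : Finset (EuclideanSpace ℝ (Fin d)), A ⊆ X → A.card ≤ F →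
      p ∈ convexHull ℝ ((X \ A : Finset (EuclideanSpace ℝ (Fin d))) : Set (EuclideanSpace ℝ (Fin d))) := by
  subst hN
  exact fun A hAX hAF => mem_convexHull_sdiff_of_lt_card_filter hF hp hAX hAF
end

section
/- Let a, b ∈ R^3 with all coordinates nonnegative, with a lying on the plane x = 0 (first coordinate 0) and b on the plane y = 0 (second coordinate 0), and suppose both third coordinates are at most h ≥ 0. If μ ≥ ||a - b|| and μ ≥ h, then min{||a||, ||b||} ≤ sqrt(3/2)·μ. -/
/-- For `a, b ∈ ℝ³` with nonnegative coordinates, `a` on the plane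
`x = 0`, `b` on the plane `y = 0`, third coordinates at most `h ≥ 0`, and
`μ ≥ ‖a - b‖`, `μ ≥ h`, one has `min ‖a‖ ‖b‖ ≤ √(3/2)·μ`. -/
theorem stmt_10 (a b : EuclideanSpace ℝ (Fin 3)) (h μ : ℝ)
    (ha : ∀ i, 0 ≤ a i) (hb : ∀ i, 0 ≤ b i)
    (ha0 : a 0 = 0) (hb1 : b 1 = 0)
    (hh : 0 ≤ h) (haz : a 2 ≤ h) (hbz : b 2 ≤ h)
    (hμab : ‖a - b‖ ≤ μ) (hμh : h ≤ μ) :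
    min ‖a‖ ‖b‖ ≤ Real.sqrt (3 / 2) * μ := by
  have hμ0 : 0 ≤ μ := le_trans hh hμh
  have hna : ‖a‖ ^ 2 = ∑ i, (a i) ^ 2 := by
    rw [EuclideanSpace.norm_eq, Real.sq_sqrt (by positivity)]
    simp [Real.norm_eq_abs, sq_abs]
  have hnb : ‖b‖ ^ 2 = ∑ i, (b i) ^ 2 := by
    rw [EuclideanSpace.norm_eq, Real.sq_sqrt (by positivity)]
    simp [Real.norm_eq_abs, sq_abs]
  have hnab : ‖a - b‖ ^ 2 = ∑ i, (a i - b i) ^ 2 := by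
    rw [EuclideanSpace.norm_eq, Real.sq_sqrt (by positivity)]
    simp [Real.norm_eq_abs, sq_abs]
  rw [Fin.sum_univ_three] at hna hnb hnab
  have hab2 : ‖a - b‖ ^ 2 ≤ μ ^ 2 := by nlinarith [norm_nonneg (a - b)]
  simp only [ha0, hb1] at hna hnb hnab
  have key : ‖a‖ ^ 2 + ‖b‖ ^ 2 ≤ 3 * μ ^ 2 := by
    nlinarith [mul_self_le_mul_self (ha 2) haz, mul_self_le_mul_self (hb 2) hbz,
      mul_self_le_mul_self hh hμh, sq_nonneg (a 2 - b 2), sq_nonneg h]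
  have hm0 : 0 ≤ min ‖a‖ ‖b‖ := le_min (norm_nonneg a) (norm_nonneg b)
  have hm : (min ‖a‖ ‖b‖) ^ 2 ≤ 3 / 2 * μ ^ 2 := by
    rcases min_le_iff.mpr (Or.inl (le_refl ‖a‖)) with _
    rcases le_total ‖a‖ ‖b‖ with hc | hc
    · rw [min_eq_left hc]; nlinarith [norm_nonneg a]
    · rw [min_eq_right hc]; nlinarith [norm_nonneg b]
  calc min ‖a‖ ‖b‖ = Real.sqrt ((min ‖a‖ ‖b‖) ^ 2) := (Real.sqrt_sq hm0).symm
    _ ≤ Real.sqrt (3 / 2 * μ ^ 2) := Real.sqrt_le_sqrt hm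
    _ = Real.sqrt (3 / 2) * μ := by
        rw [Real.sqrt_mul (by norm_num), Real.sqrt_sq hμ0]
end

section
/- Let X be a set of N points in R^d and let F ≥ ⌈N/(d+1)⌉ with 2F ≤ N. Then for the configuration where X consists of F+ (N−F) points placed so that two disjoint F-subsets A1, A2 ⊆ X satisfy interior(conv(X\A1)) ∩ interior(conv(X\A2)) = ∅, no F-safe point exists. Concretely: for N = 6, d = 2, F = 2, the points (0,0),(0,1),(1,0),(1,1),(2,0),(2,1) admit no 2-safe point, showing F ≤ ⌈N/(d+1)⌉ − 1 is necessary for existence of an F-safe point in general. -/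
/-- For the six-point configuration
`X = {(0,0), (0,1), (1,0), (1,1), (2,0), (2,1)} ⊆ ℝ²` (so `N = 6`, `d = 2`,
`F = 2 ≥ ⌈N/(d+1)⌉`), no `2`-safe point exists: there is no point `p` lying in the
interior of `conv (X \ A)` for every subset `A ⊆ X` of cardinality `2`. -/
theorem stmt_11
    (X : Set (ℝ × ℝ))
    (hX : X = {(0,0), (0,1), (1,0), (1,1), (2,0), (2,1)}) :
    ¬ ∃ p : ℝ × ℝ, ∀ A ⊆ X, A.ncard = 2 → p ∈ interior (convexHull ℝ (X \ A)) := by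
  rintro ⟨p, hp⟩
  have hlinfst : IsLinearMap ℝ (fun q : ℝ × ℝ => q.1) := (LinearMap.fst ℝ ℝ ℝ).isLinear
  -- A1 = {(2,0),(2,1)} : conv(X\A1) ⊆ {x ≤ 1}
  have h1 : p ∈ interior (convexHull ℝ (X \ {((2:ℝ),(0:ℝ)), (2,1)})) := by
    apply hp
    · rw [hX]; intro q hq
      simp only [Set.mem_insert_iff, Set.mem_singleton_iff] at hq ⊢
      rcases hq with rfl | rfl <;> tauto
    · exact Set.ncard_pair (by norm_num [Prod.ext_iff])
  have h2 : p ∈ interior (convexHull ℝ (X \ {((0:ℝ),(0:ℝ)), (0,1)})) := by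
    apply hp
    · rw [hX]; intro q hq
      simp only [Set.mem_insert_iff, Set.mem_singleton_iff] at hq ⊢
      rcases hq with rfl | rfl <;> tauto
    · exact Set.ncard_pair (by norm_num [Prod.ext_iff])
  have key_le : interior {q : ℝ × ℝ | q.1 ≤ 1} = {q : ℝ × ℝ | q.1 < 1} := by
    have : {q : ℝ × ℝ | q.1 ≤ 1} = (Prod.fst : ℝ × ℝ → ℝ) ⁻¹' Set.Iic 1 := rfl
    rw [this, ← isOpenMap_fst.preimage_interior_eq_interior_preimage continuous_fst,
      interior_Iic]
    rfl
  have key_ge : interior {q : ℝ × ℝ | 1 ≤ q.1} = {q : ℝ × ℝ | 1 < q.1} := by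
    have : {q : ℝ × ℝ | 1 ≤ q.1} = (Prod.fst : ℝ × ℝ → ℝ) ⁻¹' Set.Ici 1 := rfl
    rw [this, ← isOpenMap_fst.preimage_interior_eq_interior_preimage continuous_fst,
      interior_Ici]
    rfl
  have hs1 : convexHull ℝ (X \ {((2:ℝ),(0:ℝ)), (2,1)}) ⊆ {q : ℝ × ℝ | q.1 ≤ 1} := by
    apply convexHull_min _ (convex_halfSpace_le hlinfst 1)
    rw [hX]
    rintro q ⟨hq, hq'⟩
    simp only [Set.mem_insert_iff, Set.mem_singleton_iff] at hq
    rcases hq with rfl | rfl | rfl | rfl | rfl | rfl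
    · norm_num
    · norm_num
    · norm_num
    · norm_num
    · exact absurd (Set.mem_insert _ _) hq'
    · exact absurd (Set.mem_insert_of_mem _ rfl) hq'
  have hs2 : convexHull ℝ (X \ {((0:ℝ),(0:ℝ)), (0,1)}) ⊆ {q : ℝ × ℝ | 1 ≤ q.1} := by
    apply convexHull_min _ (convex_halfSpace_ge hlinfst 1)
    rw [hX]
    rintro q ⟨hq, hq'⟩
    simp only [Set.mem_insert_iff, Set.mem_singleton_iff] at hq
    rcases hq with rfl | rfl | rfl | rfl | rfl | rfl
    · exact absurd (Set.mem_insert _ _) hq'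
    · exact absurd (Set.mem_insert_of_mem _ rfl) hq'
    · norm_num
    · norm_num
    · norm_num
    · norm_num
  have hlt : p.1 < 1 := by
    have h := interior_mono hs1 h1
    rw [key_le] at h
    exact h
  have hgt : 1 < p.1 := by
    have h := interior_mono hs2 h2
    rw [key_ge] at h
    exact h
  linarith
end
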